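/- arXiv:2411.17159 — 8 statements merged into one kernel-verified Lean document; each statement's English description precedes it below -/
import Mathlib

section
/- Let z = x + iy be a point of the hyperbola H. Then the following are equivalent: (i) z ∈ R; (ii) (x − (α+α')/2)² − 𝒜²/4 ≤ 0; (iii) x ∈ [min(α,α'), max(α,α')] or y ∈ [min(β,β'), max(β,β')]. -/
/-! A number `t` lies between `p` and `q` iff `(t - p) * (t - q) ≤ 0`, i.e. iff
`(t - (p + q)/2)² - (q - p)²/4 ≤ 0`. The equation of `H` says precisely that this centred
quantity is the same for `x` (with `α, α'`) and for `y` (with `β, β'`), so on `H` the conditions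
on `x` and on `y` are both equivalent to (ii). -/

open Set

theorem Set.mem_uIcc_iff_sub_mul_sub_nonpos {p q t : ℝ} :
    t ∈ uIcc p q ↔ (t - p) * (t - q) ≤ 0 := by
  rw [mem_uIcc, mul_nonpos_iff, sub_nonneg, sub_nonpos, sub_nonpos, sub_nonneg,
    and_comm (a := t ≤ p)]

theorem mem_Icc_min_max_iff_sq_sub_center_nonpos (p q t : ℝ) :
    t ∈ Icc (min p q) (max p q) ↔ (t - (p + q) / 2) ^ 2 - (q - p) ^ 2 / 4 ≤ 0 := by
  have centred : (t - (p + q) / 2) ^ 2 - (q - p) ^ 2 / 4 = (t - p) * (t - q) := by ring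
  rw [centred]
  exact mem_uIcc_iff_sub_mul_sub_nonpos

theorem stmt_2_general (α α' β β' : ℝ)
    (H R : Set ℂ)
    (hH : H = {w : ℂ | (w.re - (α + α') / 2) ^ 2 - (w.im - (β + β') / 2) ^ 2
        = ((α' - α) ^ 2 - (β' - β) ^ 2) / 4})
    (hR : R = {w : ℂ | w.re ∈ Set.Icc (min α α') (max α α')
        ∧ w.im ∈ Set.Icc (min β β') (max β β')})
    (z : ℂ) (hz : z ∈ H) :
    (z ∈ R ↔ (z.re - (α + α') / 2) ^ 2 - (α' - α) ^ 2 / 4 ≤ 0) ∧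
    (z ∈ R ↔ (z.re ∈ Set.Icc (min α α') (max α α')
        ∨ z.im ∈ Set.Icc (min β β') (max β β'))) := by
  subst hH hR
  have centred_eq : (z.im - (β + β') / 2) ^ 2 - (β' - β) ^ 2 / 4
      = (z.re - (α + α') / 2) ^ 2 - (α' - α) ^ 2 / 4 := by
    rw [mem_ofPred_eq] at hz
    linarith
  simp only [mem_ofPred_eq, mem_Icc_min_max_iff_sq_sub_center_nonpos, centred_eq, and_self,
    or_self]

/-- For `z = x + iy ∈ H`, the conditions (i) `z ∈ R`,
(ii) `(x − (α+α')/2)² − 𝒜²/4 ≤ 0`, and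
(iii) `x ∈ [min(α,α'), max(α,α')]` or `y ∈ [min(β,β'), max(β,β')]` are equivalent. -/
theorem stmt_2 (α α' β β' : ℝ) (hα : α ≠ α') (hβ : β ≠ β')
    (H R : Set ℂ)
    (hH : H = {w : ℂ | (w.re - (α + α') / 2) ^ 2 - (w.im - (β + β') / 2) ^ 2
        = ((α' - α) ^ 2 - (β' - β) ^ 2) / 4})
    (hR : R = {w : ℂ | w.re ∈ Set.Icc (min α α') (max α α')
        ∧ w.im ∈ Set.Icc (min β β') (max β β')})
    (z : ℂ) (hz : z ∈ H) :
    (z ∈ R ↔ (z.re - (α + α') / 2) ^ 2 - (α' - α) ^ 2 / 4 ≤ 0) ∧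
    (z ∈ R ↔ (z.re ∈ Set.Icc (min α α') (max α α')
        ∨ z.im ∈ Set.Icc (min β β') (max β β'))) :=
  stmt_2_general α α' β β' H R hH hR z hz
end

section
/- Let z = x + iy be a point of the hyperbola H. Then the following are equivalent: (i) z lies in the topological interior of R; (ii) (x − (α+α')/2)² − 𝒜²/4 < 0; (iii) x ∈ (min(α,α'), max(α,α')) or y ∈ (min(β,β'), max(β,β')). -/
/-! On `H` the quadratic forms `(x − (α+α')/2)² − 𝒜²/4 = (x − α)(x − α')` and
`(y − (β+β')/2)² − ℬ²/4 = (y − β)(y − β')` coincide, and each is negative exactly when its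
variable lies strictly between the two endpoints. So on `H` the open conditions on `x` and on `y`
are equivalent, and their conjunction (which is `interior R`), their disjunction and (ii) agree. -/

open Set Complex

lemma sub_midpoint_sq_sub_half_sq_lt_zero_iff (x a b : ℝ) :
    (x - (a + b) / 2) ^ 2 - (b - a) ^ 2 / 4 < 0 ↔ x ∈ Ioo (min a b) (max a b) := by
  have hfactor : (x - (a + b) / 2) ^ 2 - (b - a) ^ 2 / 4 = (x - a) * (x - b) := by ring
  rw [hfactor, mul_neg_iff]
  rcases le_total a b with h | h
  · rw [min_eq_left h, max_eq_right h, mem_Ioo]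
    constructor
    · rintro (⟨h₁, h₂⟩ | ⟨h₁, h₂⟩) <;> constructor <;> linarith
    · rintro ⟨h₁, h₂⟩; left; constructor <;> linarith
  · rw [min_eq_right h, max_eq_left h, mem_Ioo]
    constructor
    · rintro (⟨h₁, h₂⟩ | ⟨h₁, h₂⟩) <;> constructor <;> linarith
    · rintro ⟨h₁, h₂⟩; right; constructor <;> linarith

theorem stmt_3_general (α α' β β' : ℝ)
    (H R : Set ℂ)
    (hH : H = {w : ℂ | (w.re - (α + α') / 2) ^ 2 - (w.im - (β + β') / 2) ^ 2
        = ((α' - α) ^ 2 - (β' - β) ^ 2) / 4})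
    (hR : R = {w : ℂ | w.re ∈ Set.Icc (min α α') (max α α')
        ∧ w.im ∈ Set.Icc (min β β') (max β β')})
    (z : ℂ) (hz : z ∈ H) :
    (z ∈ interior R ↔ (z.re - (α + α') / 2) ^ 2 - (α' - α) ^ 2 / 4 < 0) ∧
    (z ∈ interior R ↔ (z.re ∈ Set.Ioo (min α α') (max α α')
        ∨ z.im ∈ Set.Ioo (min β β') (max β β'))) := by
  have hR' : R = Icc (min α α') (max α α') ×ℂ Icc (min β β') (max β β') := hR
  have hforms : (z.re - (α + α') / 2) ^ 2 - (α' - α) ^ 2 / 4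
      = (z.im - (β + β') / 2) ^ 2 - (β' - β) ^ 2 / 4 := by
    have hz' : (z.re - (α + α') / 2) ^ 2 - (z.im - (β + β') / 2) ^ 2
        = ((α' - α) ^ 2 - (β' - β) ^ 2) / 4 := by rw [hH] at hz; exact hz
    linarith
  have hre_iff_im : z.re ∈ Ioo (min α α') (max α α') ↔ z.im ∈ Ioo (min β β') (max β β') := by
    rw [← sub_midpoint_sq_sub_half_sq_lt_zero_iff, ← sub_midpoint_sq_sub_half_sq_lt_zero_iff,
      hforms]
  rw [hR', interior_reProdIm, interior_Icc, interior_Icc, mem_reProdIm,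
    sub_midpoint_sq_sub_half_sq_lt_zero_iff, ← hre_iff_im, and_self, or_self]
  exact ⟨Iff.rfl, Iff.rfl⟩

/-- For `z = x + iy ∈ H`, the conditions (i) `z ∈ interior R`,
(ii) `(x − (α+α')/2)² − 𝒜²/4 < 0`, and
(iii) `x ∈ (min(α,α'), max(α,α'))` or `y ∈ (min(β,β'), max(β,β'))` are equivalent. -/
theorem stmt_3 (α α' β β' : ℝ) (hα : α ≠ α') (hβ : β ≠ β')
    (H R : Set ℂ)
    (hH : H = {w : ℂ | (w.re - (α + α') / 2) ^ 2 - (w.im - (β + β') / 2) ^ 2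
        = ((α' - α) ^ 2 - (β' - β) ^ 2) / 4})
    (hR : R = {w : ℂ | w.re ∈ Set.Icc (min α α') (max α α')
        ∧ w.im ∈ Set.Icc (min β β') (max β β')})
    (z : ℂ) (hz : z ∈ H) :
    (z ∈ interior R ↔ (z.re - (α + α') / 2) ^ 2 - (α' - α) ^ 2 / 4 < 0) ∧
    (z ∈ interior R ↔ (z.re ∈ Set.Ioo (min α α') (max α α')
        ∨ z.im ∈ Set.Ioo (min β β') (max β β'))) :=
  stmt_3_general α α' β β' H R hH hR z hz
end

section
/- Let z be a point of the hyperbola H. Then z ∈ R if and only if |Im((z − (α+α')/2 − i(β+β')/2)²)| ≤ |𝒜ℬ|/2. -/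
/-!
With `u = Re z − (α+α')/2` and `v = Im z − (β+β')/2` the imaginary part in question is `2uv`,
the hyperbola reads `u² − v² = (𝒜/2)² − (ℬ/2)²`, and `z ∈ R` means `|u| ≤ |𝒜|/2` and `|v| ≤ |ℬ|/2`.
On the hyperbola `u² − (𝒜/2)² = v² − (ℬ/2)²`, so the two bounds hold or fail together;
hence they hold exactly when the product bound `|uv| ≤ |𝒜ℬ|/4` does.
-/

lemma Real.mem_Icc_min_max_iff_abs_sub_midpoint_le (a b x : ℝ) :
    x ∈ Set.Icc (min a b) (max a b) ↔ |x - (a + b) / 2| ≤ |b - a| / 2 := by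
  rw [Real.Icc_eq_closedBall, Metric.mem_closedBall, Real.dist_eq, min_add_max, max_sub_min_eq_abs]

section Hyperbola

variable {u v a b : ℝ}

lemma abs_le_iff_abs_le_of_sq_sub_sq_eq (ha : 0 ≤ a) (hb : 0 ≤ b)
    (h : u ^ 2 - v ^ 2 = a ^ 2 - b ^ 2) : |u| ≤ a ↔ |v| ≤ b := by
  rw [← sq_le_sq₀ (abs_nonneg u) ha, ← sq_le_sq₀ (abs_nonneg v) hb, sq_abs, sq_abs]
  constructor <;> intro <;> linarith

lemma abs_le_and_abs_le_iff_abs_mul_le_of_sq_sub_sq_eq (ha : 0 ≤ a) (hb : 0 ≤ b)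
    (h : u ^ 2 - v ^ 2 = a ^ 2 - b ^ 2) : (|u| ≤ a ∧ |v| ≤ b) ↔ |u * v| ≤ a * b := by
  have huv := abs_le_iff_abs_le_of_sq_sub_sq_eq ha hb h
  refine ⟨fun ⟨hu, hv⟩ ↦ abs_mul u v ▸ mul_le_mul hu hv (abs_nonneg v) ha, fun hprod ↦ ?_⟩
  by_contra hout
  have hu : a < |u| := not_le.mp fun hu ↦ hout ⟨hu, huv.mp hu⟩
  have hv : b < |v| := not_le.mp fun hv ↦ hu.not_ge (huv.mpr hv)
  exact hprod.not_gt (abs_mul u v ▸ mul_lt_mul'' hu hv ha hb)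

end Hyperbola

lemma Complex.im_sq_sub_sub_I_mul (z : ℂ) (c d : ℝ) :
    ((z - (c : ℂ) - Complex.I * (d : ℂ)) ^ 2).im = 2 * ((z.re - c) * (z.im - d)) := by
  simp only [sq, Complex.mul_im, Complex.sub_re, Complex.sub_im, Complex.mul_re, Complex.I_re,
    Complex.I_im, Complex.ofReal_re, Complex.ofReal_im]
  ring

theorem stmt_4_general (α α' β β' : ℝ)
    (H R : Set ℂ)
    (hH : H = {w : ℂ | (w.re - (α + α') / 2) ^ 2 - (w.im - (β + β') / 2) ^ 2
        = ((α' - α) ^ 2 - (β' - β) ^ 2) / 4})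
    (hR : R = {w : ℂ | w.re ∈ Set.Icc (min α α') (max α α')
        ∧ w.im ∈ Set.Icc (min β β') (max β β')})
    (z : ℂ) (hz : z ∈ H) :
    z ∈ R ↔
      |((z - (((α + α') / 2 : ℝ) : ℂ) - Complex.I * (((β + β') / 2 : ℝ) : ℂ)) ^ 2).im|
        ≤ |(α' - α) * (β' - β)| / 2 := by
  subst hH hR
  have hyp : (z.re - (α + α') / 2) ^ 2 - (z.im - (β + β') / 2) ^ 2
      = (|α' - α| / 2) ^ 2 - (|β' - β| / 2) ^ 2 := by
    rw [div_pow, div_pow, sq_abs, sq_abs]; linarith [hz.out]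
  rw [Set.mem_ofPred_eq, Real.mem_Icc_min_max_iff_abs_sub_midpoint_le,
    Real.mem_Icc_min_max_iff_abs_sub_midpoint_le,
    abs_le_and_abs_le_iff_abs_mul_le_of_sq_sub_sq_eq (by positivity) (by positivity) hyp,
    Complex.im_sq_sub_sub_I_mul, abs_mul 2, abs_two, abs_mul (α' - α)]
  constructor <;> intro <;> linarith

/-- For `z ∈ H`, `z ∈ R` iff `|Im((z − (α+α')/2 − i(β+β')/2)²)| ≤ |𝒜ℬ|/2`. -/
theorem stmt_4 (α α' β β' : ℝ) (hα : α ≠ α') (hβ : β ≠ β')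
    (H R : Set ℂ)
    (hH : H = {w : ℂ | (w.re - (α + α') / 2) ^ 2 - (w.im - (β + β') / 2) ^ 2
        = ((α' - α) ^ 2 - (β' - β) ^ 2) / 4})
    (hR : R = {w : ℂ | w.re ∈ Set.Icc (min α α') (max α α')
        ∧ w.im ∈ Set.Icc (min β β') (max β β')})
    (z : ℂ) (hz : z ∈ H) :
    z ∈ R ↔
      |((z - (((α + α') / 2 : ℝ) : ℂ) - Complex.I * (((β + β') / 2 : ℝ) : ℂ)) ^ 2).im|
        ≤ |(α' - α) * (β' - β)| / 2 :=
  stmt_4_general α α' β β' H R hH hR z hz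
end

section
/- The matrix X̃² satisfies X̃² = ((𝒜² − ℬ²)/4)·I + i(P̃Q̃ + Q̃P̃); consequently X̃² is a normal matrix (it commutes with its conjugate transpose), its Hermitian real part (X̃² + (X̃²)*)/2 equals ((𝒜² − ℬ²)/4)·I, and its Hermitian imaginary part P̃Q̃ + Q̃P̃ satisfies ‖P̃Q̃ + Q̃P̃‖ ≤ |𝒜ℬ|/2. -/
/-!
Centring `P` and `Q` at the midpoints of their two-point spectra turns the quadratic relations
into `P̃² = (𝒜/2)²` and `Q̃² = (ℬ/2)²`, so `X̃² = P̃² − Q̃² + i(P̃Q̃ + Q̃P̃)` is a real scalar plus `i`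
times a Hermitian matrix, and all such matrices commute with their adjoints. The C*-identity
`‖P̃‖² = ‖P̃ᴴP̃‖ = ‖P̃²‖` gives `‖P̃‖ ≤ |𝒜|/2` and `‖Q̃‖ ≤ |ℬ|/2`, whence the norm bound.
-/

open Matrix
open scoped Matrix.Norms.L2Operator

section Algebraic

variable {𝕜 A : Type*} [Field 𝕜] [CharZero 𝕜] [Ring A] [Algebra 𝕜 A]

theorem mul_self_sub_midpoint_smul_one {p : A} {a b : 𝕜}
    (h : (p - a • 1) * (p - b • 1) = 0) :
    (p - ((a + b) / 2) • 1) * (p - ((a + b) / 2) • 1) = ((b - a) / 2) ^ 2 • (1 : A) := by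
  rw [← sub_eq_zero, ← h]
  simp only [sub_mul, mul_sub, smul_mul_assoc, mul_smul_comm, one_mul, mul_one]
  match_scalars <;> ring

end Algebraic

theorem add_I_smul_sq {A : Type*} [Ring A] [Algebra ℂ A] {p q : A} {c d : ℂ}
    (hp : p * p = c • 1) (hq : q * q = d • 1) :
    (p + Complex.I • q) ^ 2 = (c - d) • 1 + Complex.I • (p * q + q * p) := by
  rw [sq, add_mul, mul_add, mul_add, smul_mul_assoc, mul_smul_comm, smul_mul_assoc,
    mul_smul_comm, smul_smul, Complex.I_mul_I, hp, hq]
  module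

section StarAlgebra

variable {A : Type*} [Ring A] [StarRing A] [Algebra ℂ A] [StarModule ℂ A]

theorem star_ofReal_smul_one_add_I_smul (r : ℝ) {s : A} (hs : IsSelfAdjoint s) :
    star ((r : ℂ) • 1 + Complex.I • s) = (r : ℂ) • 1 - Complex.I • s := by
  simp only [star_add, star_smul, star_one, hs.star_eq, Complex.star_def, Complex.conj_ofReal,
    Complex.conj_I]
  module

theorem commute_ofReal_smul_one_add_I_smul_star (r : ℝ) {s : A} (hs : IsSelfAdjoint s) :
    Commute ((r : ℂ) • 1 + Complex.I • s) (star ((r : ℂ) • 1 + Complex.I • s)) := by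
  rw [star_ofReal_smul_one_add_I_smul r hs]
  have hs' : Commute ((r : ℂ) • 1 + Complex.I • s) s :=
    ((Commute.one_left s).smul_left _).add_left ((Commute.refl s).smul_left _)
  exact ((Commute.one_right _).smul_right _).sub_right (hs'.smul_right _)

end StarAlgebra

theorem CStarRing.norm_one_le {E : Type*} [NormedRing E] [StarRing E] [CStarRing E] :
    ‖(1 : E)‖ ≤ 1 := by
  have h := CStarRing.norm_star_mul_self (x := (1 : E))
  rw [star_one, one_mul] at h
  nlinarith [norm_nonneg (1 : E)]

theorem IsSelfAdjoint.norm_le_of_mul_self_eq {𝕜 E : Type*} [RCLike 𝕜] [NormedRing E]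
    [StarRing E] [CStarRing E] [NormedAlgebra 𝕜 E] {a : E} (ha : IsSelfAdjoint a) {t : ℝ}
    (h : a * a = (t : 𝕜) ^ 2 • 1) : ‖a‖ ≤ |t| := by
  have hsq : ‖a‖ ^ 2 ≤ |t| ^ 2 :=
    calc ‖a‖ ^ 2 = ‖star a * a‖ := by rw [CStarRing.norm_star_mul_self, sq]
      _ = ‖(t : 𝕜) ^ 2‖ * ‖(1 : E)‖ := by rw [ha.star_eq, h, norm_smul]
      _ ≤ |t| ^ 2 := by
        rw [norm_pow, RCLike.norm_ofReal]
        exact mul_le_of_le_one_right (by positivity) CStarRing.norm_one_le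
  exact (pow_le_pow_iff_left₀ (norm_nonneg a) (abs_nonneg t) two_ne_zero).mp hsq

theorem stmt_6_general (n : ℕ) (α α' β β' : ℝ)
    (P Q X Ptil Qtil Xtil : Matrix (Fin n) (Fin n) ℂ)
    (hP : P.IsHermitian) (hQ : Q.IsHermitian)
    (hPs : (P - (α : ℂ) • 1) * (P - (α' : ℂ) • 1) = 0)
    (hQs : (Q - (β : ℂ) • 1) * (Q - (β' : ℂ) • 1) = 0)
    (hX : X = P + Complex.I • Q)
    (hPtil : Ptil = P - ((((α + α') / 2 : ℝ)) : ℂ) • 1)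
    (hQtil : Qtil = Q - ((((β + β') / 2 : ℝ)) : ℂ) • 1)
    (hXtil : Xtil = X - (((((α + α') / 2 : ℝ)) : ℂ)
        + Complex.I * ((((β + β') / 2 : ℝ)) : ℂ)) • 1) :
    Xtil ^ 2 = (((((α' - α) ^ 2 - (β' - β) ^ 2) / 4 : ℝ)) : ℂ) • 1
        + Complex.I • (Ptil * Qtil + Qtil * Ptil) ∧
    Xtil ^ 2 * (Xtil ^ 2)ᴴ = (Xtil ^ 2)ᴴ * Xtil ^ 2 ∧
    (1 / 2 : ℂ) • (Xtil ^ 2 + (Xtil ^ 2)ᴴ)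
        = (((((α' - α) ^ 2 - (β' - β) ^ 2) / 4 : ℝ)) : ℂ) • 1 ∧
    ‖Ptil * Qtil + Qtil * Ptil‖ ≤ |(α' - α) * (β' - β)| / 2 := by
  have hPtil_sq : Ptil * Ptil = ((((α' - α) / 2 : ℝ) : ℂ)) ^ 2 • 1 := by
    rw [hPtil]; push_cast; exact mul_self_sub_midpoint_smul_one hPs
  have hQtil_sq : Qtil * Qtil = ((((β' - β) / 2 : ℝ) : ℂ)) ^ 2 • 1 := by
    rw [hQtil]; push_cast; exact mul_self_sub_midpoint_smul_one hQs
  have hPtil_sa : IsSelfAdjoint Ptil :=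
    hPtil ▸ hP.isSelfAdjoint.sub (.smul (Complex.conj_ofReal _) (.one _))
  have hQtil_sa : IsSelfAdjoint Qtil :=
    hQtil ▸ hQ.isSelfAdjoint.sub (.smul (Complex.conj_ofReal _) (.one _))
  have hS_sa : IsSelfAdjoint (Ptil * Qtil + Qtil * Ptil) := by
    simpa only [isSelfAdjoint_iff, star_add, star_mul, hPtil_sa.star_eq, hQtil_sa.star_eq]
      using add_comm _ _
  have hXtil_sq : Xtil ^ 2 = (((((α' - α) ^ 2 - (β' - β) ^ 2) / 4 : ℝ)) : ℂ) • 1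
      + Complex.I • (Ptil * Qtil + Qtil * Ptil) := by
    have hXtil' : Xtil = Ptil + Complex.I • Qtil := by
      rw [hXtil, hX, hPtil, hQtil]; module
    rw [hXtil', add_I_smul_sq hPtil_sq hQtil_sq]
    congr 2; push_cast; ring
  refine ⟨hXtil_sq, ?_, ?_, ?_⟩
  · rw [hXtil_sq]; exact (commute_ofReal_smul_one_add_I_smul_star _ hS_sa).eq
  · rw [hXtil_sq, ← star_eq_conjTranspose, star_ofReal_smul_one_add_I_smul _ hS_sa]; module
  · calc ‖Ptil * Qtil + Qtil * Ptil‖ ≤ ‖Ptil‖ * ‖Qtil‖ + ‖Qtil‖ * ‖Ptil‖ :=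
          (norm_add_le _ _).trans (add_le_add (norm_mul_le _ _) (norm_mul_le _ _))
      _ ≤ |(α' - α) / 2| * |(β' - β) / 2| + |(β' - β) / 2| * |(α' - α) / 2| := by
          have hP' := hPtil_sa.norm_le_of_mul_self_eq (t := (α' - α) / 2) hPtil_sq
          have hQ' := hQtil_sa.norm_le_of_mul_self_eq (t := (β' - β) / 2) hQtil_sq
          gcongr
      _ = |(α' - α) * (β' - β)| / 2 := by rw [abs_div, abs_div, abs_mul]; ring

/-- `X̃² = ((𝒜² − ℬ²)/4)·I + i(P̃Q̃ + Q̃P̃)`; consequently `X̃²` is normal, its Hermitian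
real part equals `((𝒜² − ℬ²)/4)·I`, and its Hermitian imaginary part `P̃Q̃ + Q̃P̃`
has ℓ²→ℓ² operator norm at most `|𝒜ℬ|/2`. -/
theorem stmt_6 (n : ℕ) (hn : 1 ≤ n) (α α' β β' : ℝ)
    (P Q X Ptil Qtil Xtil : Matrix (Fin n) (Fin n) ℂ)
    (hP : P.IsHermitian) (hQ : Q.IsHermitian)
    (hPs : (P - (α : ℂ) • 1) * (P - (α' : ℂ) • 1) = 0)
    (hQs : (Q - (β : ℂ) • 1) * (Q - (β' : ℂ) • 1) = 0)
    (hX : X = P + Complex.I • Q)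
    (hPtil : Ptil = P - ((((α + α') / 2 : ℝ)) : ℂ) • 1)
    (hQtil : Qtil = Q - ((((β + β') / 2 : ℝ)) : ℂ) • 1)
    (hXtil : Xtil = X - (((((α + α') / 2 : ℝ)) : ℂ)
        + Complex.I * ((((β + β') / 2 : ℝ)) : ℂ)) • 1) :
    Xtil ^ 2 = (((((α' - α) ^ 2 - (β' - β) ^ 2) / 4 : ℝ)) : ℂ) • 1
        + Complex.I • (Ptil * Qtil + Qtil * Ptil) ∧
    Xtil ^ 2 * (Xtil ^ 2)ᴴ = (Xtil ^ 2)ᴴ * Xtil ^ 2 ∧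
    (1 / 2 : ℂ) • (Xtil ^ 2 + (Xtil ^ 2)ᴴ)
        = (((((α' - α) ^ 2 - (β' - β) ^ 2) / 4 : ℝ)) : ℂ) • 1 ∧
    ‖Ptil * Qtil + Qtil * Ptil‖ ≤ |(α' - α) * (β' - β)| / 2 :=
  stmt_6_general n α α' β β' P Q X Ptil Qtil Xtil hP hQ hPs hQs hX hPtil hQtil hXtil
end

section
/- If ρ ∈ ℂ is an eigenvalue of X̃² (i.e., there exists v ∈ ℂⁿ, v ≠ 0, with X̃²v = ρv), then Re(ρ) = (𝒜² − ℬ²)/4 and |Im(ρ)| ≤ |𝒜ℬ|/2. -/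
open Matrix

/-!
Writing `a = 𝒜/2`, `b = ℬ/2`, the shifted matrices satisfy `P̃² = a²` and `Q̃² = b²`, so
`X̃² = (a² - b²) + i (P̃Q̃ + Q̃P̃)`. In the C⋆-algebra of matrices with the operator norm the
anticommutator `P̃Q̃ + Q̃P̃` is self-adjoint, hence has real spectrum, bounded by its norm
`≤ 2‖P̃‖‖Q̃‖ = 2|a||b|`, where `‖P̃‖² = ‖P̃²‖ = a²` by the C⋆-identity.
-/

open Complex
open scoped Matrix.Norms.L2Operator

theorem sub_midpoint_smul_one_sq {K A : Type*} [Field K] [CharZero K] [Ring A] [Algebra K A]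
    {x : A} {a b : K} (h : (x - a • 1) * (x - b • 1) = 0) :
    (x - ((a + b) / 2) • 1) ^ 2 = ((b - a) / 2) ^ 2 • 1 := by
  rw [← sub_eq_zero, ← h]
  simp only [sq, sub_mul, mul_sub, smul_mul_assoc, mul_smul_comm, mul_one, one_mul]
  module

theorem Matrix.mem_spectrum_of_mulVec_eq_smul {K n : Type*} [Field K] [Fintype n] [DecidableEq n]
    {M : Matrix n n K} {v : n → K} (hv : v ≠ 0) {ρ : K} (h : M *ᵥ v = ρ • v) :
    ρ ∈ spectrum K M := by
  rw [← spectrum_toLin', ← Module.End.hasEigenvalue_iff_mem_spectrum]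
  exact Module.End.hasEigenvalue_of_hasEigenvector
    ⟨Module.End.mem_eigenspace_iff.2 (by rwa [toLin'_apply]), hv⟩

theorem IsSelfAdjoint.sub_ofReal_smul_one {R : Type*} [Ring R] [StarRing R] [Algebra ℂ R]
    [StarModule ℂ R] {x : R} (hx : IsSelfAdjoint x) (r : ℝ) : IsSelfAdjoint (x - (r : ℂ) • 1) :=
  hx.sub (IsSelfAdjoint.smul (conj_ofReal r) (.one R))

section CStarAlgebra

variable {A : Type*} [CStarAlgebra A] [Nontrivial A]

theorem IsSelfAdjoint.norm_eq_abs_of_sq_eq {p : A} (hp : IsSelfAdjoint p) {a : ℝ}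
    (hp2 : p ^ 2 = ((a : ℂ) ^ 2) • 1) : ‖p‖ = |a| := by
  have h : ‖p‖ ^ 2 = |a| ^ 2 := by
    rw [← hp.norm_mul_self, ← sq, hp2, norm_smul, norm_one, mul_one, norm_pow, norm_real,
      Real.norm_eq_abs]
  exact (pow_left_inj₀ (norm_nonneg p) (abs_nonneg a) two_ne_zero).1 h

theorem IsSelfAdjoint.exists_eq_add_I_mul_of_mem_spectrum {s : A}
    (hs : IsSelfAdjoint s) {c ρ : ℂ} (hρ : ρ ∈ spectrum ℂ (algebraMap ℂ A c + I • s)) :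
    ∃ μ : ℝ, ρ = c + I * μ ∧ |μ| ≤ ‖s‖ := by
  rw [← sub_add_cancel ρ c, spectrum.add_mem_add_iff] at hρ
  have hμ : -I * (ρ - c) ∈ spectrum ℂ s := by
    have := spectrum.smul_mem_smul_iff (r := Units.mk0 (-I) (neg_ne_zero.2 I_ne_zero)).2 hρ
    simpa [smul_smul] using this
  refine ⟨(-I * (ρ - c)).re, ?_, ?_⟩
  · rw [← hs.mem_spectrum_eq_re hμ]
    linear_combination (ρ - c) * I_sq
  · have := spectrum.norm_le_norm_of_mem hμ
    rwa [hs.mem_spectrum_eq_re hμ, norm_real, Real.norm_eq_abs] at this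

theorem mem_spectrum_sq_add_I_smul {p q : A} (hp : IsSelfAdjoint p) (hq : IsSelfAdjoint q)
    {a b : ℝ} (hp2 : p ^ 2 = ((a : ℂ) ^ 2) • 1) (hq2 : q ^ 2 = ((b : ℂ) ^ 2) • 1) {ρ : ℂ}
    (hρ : ρ ∈ spectrum ℂ ((p + I • q) ^ 2)) :
    ρ.re = a ^ 2 - b ^ 2 ∧ |ρ.im| ≤ 2 * |a| * |b| := by
  have hsq :
      (p + I • q) ^ 2 = algebraMap ℂ A ((a ^ 2 - b ^ 2 : ℝ) : ℂ) + I • (p * q + q * p) := by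
    calc (p + I • q) ^ 2 = p ^ 2 + I • (p * q + q * p) + (I * I) • q ^ 2 := by
          simp only [sq, add_mul, mul_add, smul_mul_assoc, mul_smul_comm]; module
      _ = _ := by rw [hp2, hq2, I_mul_I, Algebra.algebraMap_eq_smul_one]; push_cast; module
  have hs : IsSelfAdjoint (p * q + q * p) := by
    rw [IsSelfAdjoint, star_add, star_mul, star_mul, hp.star_eq, hq.star_eq, add_comm]
  have hnorm : ‖p * q + q * p‖ ≤ 2 * |a| * |b| :=
    calc _ ≤ ‖p‖ * ‖q‖ + ‖q‖ * ‖p‖ := norm_add_le_of_le (norm_mul_le _ _) (norm_mul_le _ _)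
      _ = _ := by rw [hp.norm_eq_abs_of_sq_eq hp2, hq.norm_eq_abs_of_sq_eq hq2]; ring
  obtain ⟨μ, rfl, hμ⟩ := hs.exists_eq_add_I_mul_of_mem_spectrum (hsq ▸ hρ)
  simpa [-ofReal_sub, -ofReal_pow] using hμ.trans hnorm

end CStarAlgebra

/-- If `ρ` is an eigenvalue of `X̃²`, then `Re(ρ) = (𝒜² − ℬ²)/4` and `|Im(ρ)| ≤ |𝒜ℬ|/2`. -/
theorem stmt_7 (n : ℕ) (hn : 1 ≤ n) (α α' β β' : ℝ)
    (P Q X Xtil : Matrix (Fin n) (Fin n) ℂ)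
    (hP : P.IsHermitian) (hQ : Q.IsHermitian)
    (hPs : (P - (α : ℂ) • 1) * (P - (α' : ℂ) • 1) = 0)
    (hQs : (Q - (β : ℂ) • 1) * (Q - (β' : ℂ) • 1) = 0)
    (hX : X = P + Complex.I • Q)
    (hXtil : Xtil = X - (((((α + α') / 2 : ℝ)) : ℂ)
        + Complex.I * ((((β + β') / 2 : ℝ)) : ℂ)) • 1)
    (ρ : ℂ) (v : Fin n → ℂ) (hv : v ≠ 0)
    (heig : (Xtil ^ 2) *ᵥ v = ρ • v) :
    ρ.re = ((α' - α) ^ 2 - (β' - β) ^ 2) / 4 ∧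
      |ρ.im| ≤ |(α' - α) * (β' - β)| / 2 := by
  have : NeZero n := ⟨Nat.one_le_iff_ne_zero.1 hn⟩
  have hP2 : (P - (((α + α') / 2 : ℝ) : ℂ) • 1) ^ 2 = (((α' - α) / 2 : ℝ) : ℂ) ^ 2 • 1 := by
    push_cast; exact sub_midpoint_smul_one_sq hPs
  have hQ2 : (Q - (((β + β') / 2 : ℝ) : ℂ) • 1) ^ 2 = (((β' - β) / 2 : ℝ) : ℂ) ^ 2 • 1 := by
    push_cast; exact sub_midpoint_smul_one_sq hQs
  have hXt : Xtil =
      (P - (((α + α') / 2 : ℝ) : ℂ) • 1) + I • (Q - (((β + β') / 2 : ℝ) : ℂ) • 1) := by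
    rw [hXtil, hX]; module
  rw [hXt] at heig
  obtain ⟨hre, him⟩ := mem_spectrum_sq_add_I_smul (hP.isSelfAdjoint.sub_ofReal_smul_one _)
    (hQ.isSelfAdjoint.sub_ofReal_smul_one _) hP2 hQ2 (mem_spectrum_of_mulVec_eq_smul hv heig)
  refine ⟨by rw [hre]; ring, him.trans_eq ?_⟩
  rw [abs_mul, abs_div, abs_div, abs_two]; ring
end

section
/- Assume moreover α ≠ α' and β ≠ β'. Every eigenvalue λ of X = P + iQ lies in H ∩ R; explicitly, if there exists v ≠ 0 with Xv = λv, then (Re λ − α)(Re λ − α') = (Im λ − β)(Im λ − β'), Re λ ∈ [min(α,α'), max(α,α')], and Im λ ∈ [min(β,β'), max(β,β')]. -/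
/-!
Let `a = Re λ`, `b = Im λ`. Since `P` and `Q` are Hermitian, pairing `(P + iQ)v = λv` with `v`
shows that `a` and `b` are the Rayleigh quotients of `P` and `Q` at `v`. The quadratic relation
`P² = (α + α')P − αα'` then gives `‖(P − a)v‖² = −(a − α)(a − α')‖v‖²`, and likewise for `Q`.
Both right-hand sides are nonnegative, which puts `λ` in the rectangle, and they are equal
because `(P − a)v = −i(Q − b)v`, which puts `λ` on the hyperbola.
-/

open Matrix

lemma mem_Icc_min_max_of_sub_mul_sub_nonpos {R : Type*} [CommRing R] [LinearOrder R]
    [IsStrictOrderedRing R] {x a b : R} (h : (x - a) * (x - b) ≤ 0) :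
    x ∈ Set.Icc (min a b) (max a b) := by
  rcases mul_nonpos_iff.mp h with ⟨ha, hb⟩ | ⟨ha, hb⟩
  · exact ⟨min_le_of_left_le (by linarith), le_max_of_le_right (by linarith)⟩
  · exact ⟨min_le_of_right_le (by linarith), le_max_of_le_left (by linarith)⟩

open scoped ComplexOrder

namespace Matrix

lemma sub_smul_one_mul_self_of_mul_eq_zero {m R : Type*} [Fintype m] [DecidableEq m]
    [CommRing R] {P : Matrix m m R} {α α' : R} (a : R) (hPs : (P - α • 1) * (P - α' • 1) = 0) :
    (P - a • 1) * (P - a • 1) = (α + α' - 2 * a) • P + (a ^ 2 - α * α') • 1 := by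
  rw [← sub_eq_zero, ← hPs]
  simp only [sub_mul, mul_sub, smul_mul_assoc, mul_smul_comm, one_mul, mul_one]
  module

variable {m 𝕜 : Type*} [Fintype m] [DecidableEq m] [RCLike 𝕜] {P : Matrix m m 𝕜}
  {α α' a : ℝ} {v : m → 𝕜}

lemma IsHermitian.star_dotProduct_sub_rayleigh_mulVec (hP : P.IsHermitian)
    (hPs : (P - (α : 𝕜) • 1) * (P - (α' : 𝕜) • 1) = 0)
    (hv : star v ⬝ᵥ P *ᵥ v = a * (star v ⬝ᵥ v)) :
    star ((P - (a : 𝕜) • 1) *ᵥ v) ⬝ᵥ ((P - (a : 𝕜) • 1) *ᵥ v)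
      = (-((a - α) * (a - α')) : ℝ) * (star v ⬝ᵥ v) := by
  have hself : (P - (a : 𝕜) • 1)ᴴ = P - (a : 𝕜) • 1 := by
    simp [conjTranspose_smul, hP.eq]
  rw [star_mulVec, ← dotProduct_mulVec, mulVec_mulVec, hself,
    sub_smul_one_mul_self_of_mul_eq_zero _ hPs, add_mulVec, smul_mulVec, smul_mulVec,
    one_mulVec, dotProduct_add, dotProduct_smul, dotProduct_smul, hv, smul_eq_mul, smul_eq_mul]
  push_cast
  ring

lemma IsHermitian.rayleigh_sub_mul_sub_nonpos (hP : P.IsHermitian)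
    (hPs : (P - (α : 𝕜) • 1) * (P - (α' : 𝕜) • 1) = 0) (hv0 : v ≠ 0)
    (hv : star v ⬝ᵥ P *ᵥ v = a * (star v ⬝ᵥ v)) :
    (a - α) * (a - α') ≤ 0 := by
  have h := dotProduct_star_self_nonneg ((P - (a : 𝕜) • 1) *ᵥ v)
  rw [hP.star_dotProduct_sub_rayleigh_mulVec hPs hv, RCLike.nonneg_iff,
    RCLike.re_ofReal_mul] at h
  have hs := (RCLike.pos_iff.mp (dotProduct_star_self_pos_iff.mpr hv0)).1
  exact neg_nonneg.mp (nonneg_of_mul_nonneg_left h.1 hs)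

end Matrix

section Complex

variable {m : Type*} [Fintype m] {P Q : Matrix m m ℂ} {lam : ℂ} {v : m → ℂ}

lemma rayleigh_eq_re_im_of_mulVec_eq (hP : P.IsHermitian) (hQ : Q.IsHermitian)
    (heig : (P + Complex.I • Q) *ᵥ v = lam • v) :
    star v ⬝ᵥ P *ᵥ v = lam.re * (star v ⬝ᵥ v) ∧ star v ⬝ᵥ Q *ᵥ v = lam.im * (star v ⬝ᵥ v) := by
  have hsum : star v ⬝ᵥ P *ᵥ v + Complex.I * (star v ⬝ᵥ Q *ᵥ v) = lam * (star v ⬝ᵥ v) := by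
    rw [← smul_eq_mul, ← dotProduct_smul, ← smul_mulVec, ← dotProduct_add, ← add_mulVec, heig,
      dotProduct_smul, smul_eq_mul]
  have hp : (star v ⬝ᵥ P *ᵥ v).im = 0 := hP.im_star_dotProduct_mulVec_self v
  have hq : (star v ⬝ᵥ Q *ᵥ v).im = 0 := hQ.im_star_dotProduct_mulVec_self v
  have hs : (star v ⬝ᵥ v).im = 0 := (Complex.nonneg_iff.mp (dotProduct_star_self_nonneg v)).2.symm
  have hre := congrArg Complex.re hsum
  have him := congrArg Complex.im hsum
  simp only [Complex.add_re, Complex.add_im, Complex.mul_re, Complex.mul_im, Complex.I_re,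
    Complex.I_im, hp, hq, hs] at hre him
  refine ⟨Complex.ext ?_ ?_, Complex.ext ?_ ?_⟩ <;> simp [hp, hq, hs] <;> linarith

lemma star_dotProduct_sub_re_mulVec_eq_of_mulVec_eq [DecidableEq m]
    (heig : (P + Complex.I • Q) *ᵥ v = lam • v) :
    star ((P - (lam.re : ℂ) • 1) *ᵥ v) ⬝ᵥ ((P - (lam.re : ℂ) • 1) *ᵥ v)
      = star ((Q - (lam.im : ℂ) • 1) *ᵥ v) ⬝ᵥ ((Q - (lam.im : ℂ) • 1) *ᵥ v) := by
  have h : (P - (lam.re : ℂ) • 1) *ᵥ v = -Complex.I • ((Q - (lam.im : ℂ) • 1) *ᵥ v) := by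
    rw [add_mulVec, smul_mulVec] at heig
    simp only [sub_mulVec, smul_mulVec, one_mulVec]
    linear_combination (norm := module) heig + (Complex.re_add_im lam).symm • v
  rw [h, star_smul, smul_dotProduct, dotProduct_smul, smul_smul]
  simp

lemma sub_mul_sub_eq_of_mulVec_eq [DecidableEq m] (hP : P.IsHermitian) (hQ : Q.IsHermitian)
    {α α' β β' : ℝ} (hPs : (P - (α : ℂ) • 1) * (P - (α' : ℂ) • 1) = 0)
    (hQs : (Q - (β : ℂ) • 1) * (Q - (β' : ℂ) • 1) = 0) (hv : v ≠ 0)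
    (heig : (P + Complex.I • Q) *ᵥ v = lam • v) :
    (lam.re - α) * (lam.re - α') = (lam.im - β) * (lam.im - β') := by
  obtain ⟨hPv, hQv⟩ := rayleigh_eq_re_im_of_mulVec_eq hP hQ heig
  have h := (hP.star_dotProduct_sub_rayleigh_mulVec hPs hPv).symm.trans
    ((star_dotProduct_sub_re_mulVec_eq_of_mulVec_eq heig).trans
      (hQ.star_dotProduct_sub_rayleigh_mulVec hQs hQv))
  rw [mul_left_inj' (dotProduct_star_self_pos_iff.mpr hv).ne'] at h
  exact neg_inj.mp (RCLike.ofReal_inj.mp h)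

end Complex

theorem stmt_8_general (n : ℕ) (α α' β β' : ℝ)
    (P Q X : Matrix (Fin n) (Fin n) ℂ)
    (hP : P.IsHermitian) (hQ : Q.IsHermitian)
    (hPs : (P - (α : ℂ) • 1) * (P - (α' : ℂ) • 1) = 0)
    (hQs : (Q - (β : ℂ) • 1) * (Q - (β' : ℂ) • 1) = 0)
    (hX : X = P + Complex.I • Q)
    (lam : ℂ) (v : Fin n → ℂ) (hv : v ≠ 0)
    (heig : X *ᵥ v = lam • v) :
    (lam.re - α) * (lam.re - α') = (lam.im - β) * (lam.im - β') ∧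
    lam.re ∈ Set.Icc (min α α') (max α α') ∧
    lam.im ∈ Set.Icc (min β β') (max β β') := by
  subst hX
  obtain ⟨hPv, hQv⟩ := rayleigh_eq_re_im_of_mulVec_eq hP hQ heig
  exact ⟨sub_mul_sub_eq_of_mulVec_eq hP hQ hPs hQs hv heig,
    mem_Icc_min_max_of_sub_mul_sub_nonpos (hP.rayleigh_sub_mul_sub_nonpos hPs hv hPv),
    mem_Icc_min_max_of_sub_mul_sub_nonpos (hQ.rayleigh_sub_mul_sub_nonpos hQs hv hQv)⟩

/-- Every eigenvalue `λ` of `X = P + iQ` lies in `H ∩ R`: explicitly,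
`(Re λ − α)(Re λ − α') = (Im λ − β)(Im λ − β')`, `Re λ ∈ [min(α,α'), max(α,α')]`,
and `Im λ ∈ [min(β,β'), max(β,β')]`. -/
theorem stmt_8 (n : ℕ) (hn : 1 ≤ n) (α α' β β' : ℝ)
    (hα : α ≠ α') (hβ : β ≠ β')
    (P Q X : Matrix (Fin n) (Fin n) ℂ)
    (hP : P.IsHermitian) (hQ : Q.IsHermitian)
    (hPs : (P - (α : ℂ) • 1) * (P - (α' : ℂ) • 1) = 0)
    (hQs : (Q - (β : ℂ) • 1) * (Q - (β' : ℂ) • 1) = 0)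
    (hX : X = P + Complex.I • Q)
    (lam : ℂ) (v : Fin n → ℂ) (hv : v ≠ 0)
    (heig : X *ᵥ v = lam • v) :
    (lam.re - α) * (lam.re - α') = (lam.im - β) * (lam.im - β') ∧
    lam.re ∈ Set.Icc (min α α') (max α α') ∧
    lam.im ∈ Set.Icc (min β β') (max β β') :=
  stmt_8_general n α α' β β' P Q X hP hQ hPs hQs hX lam v hv heig
end

section
/- Let z ∈ ℂ and let w ∈ ℂ with w ≠ 0, and set λ₊ = c + w, λ₋ = c − w. Then for every v ∈ ℂⁿ with X̃²v = w²·v one has ‖z·I − X‖ · ‖(z·I − X)v‖ ≥ (min(|z − λ₊|, |z − λ₋|))² · ‖v‖. -/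
/-!
For `T := X - c` and `s := z - c` we have `z - X = s - T`. The vector `u := T v + w v` satisfies
`T u = w u`, and `(s - T) v = (s + w) v - u`, so on `span {u, v}` the operator `s - T` is upper
triangular with diagonal `s - w, s + w` in an orthonormal basis `e₁ ∥ u, e₂`. For an upper
triangular `A` with diagonal `μ, ν` on such a basis, the antiunitary "rotation"
`x ↦ x⊥ := -x̄₂ e₁ + x̄₁ e₂` satisfies `⟪A x⊥, (A x)⊥⟫ = conj (μ ν) ‖x‖²` (this is `‖adj A‖ = ‖A‖`
in disguise), whence `|μ ν| ‖x‖ ≤ ‖A‖ ‖A x‖`. When `u = 0` or `v ∥ u`, `v` is an eigenvector of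
`s - T` for `s + w` or `s - w`, and the bound is immediate.
-/

open ComplexConjugate ContinuousLinearMap
open scoped InnerProductSpace

section

variable {E : Type*} [NormedAddCommGroup E] [InnerProductSpace ℂ E]

theorem Orthonormal.inner_smul_add_smul {e₁ e₂ : E} (he : Orthonormal ℂ ![e₁, e₂])
    (a b c d : ℂ) :
    ⟪a • e₁ + b • e₂, c • e₁ + d • e₂⟫_ℂ = conj a * c + conj b * d := by
  simpa only [Fin.sum_univ_two, Matrix.cons_val_zero, Matrix.cons_val_one] using
    he.inner_sum ![a, b] ![c, d] Finset.univ

theorem Orthonormal.norm_smul_add_smul_sq {e₁ e₂ : E} (he : Orthonormal ℂ ![e₁, e₂])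
    (a b : ℂ) : ‖a • e₁ + b • e₂‖ ^ 2 = ‖a‖ ^ 2 + ‖b‖ ^ 2 := by
  have := he.inner_smul_add_smul a b a b
  rw [inner_self_eq_norm_sq_to_K, Complex.conj_mul', Complex.conj_mul'] at this
  exact Complex.ofReal_injective (by push_cast; exact this)

theorem Orthonormal.norm_conj_swap {e₁ e₂ : E} (he : Orthonormal ℂ ![e₁, e₂]) (a b : ℂ) :
    ‖-conj b • e₁ + conj a • e₂‖ = ‖a • e₁ + b • e₂‖ := by
  rw [← sq_eq_sq₀ (norm_nonneg _) (norm_nonneg _), he.norm_smul_add_smul_sq,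
    he.norm_smul_add_smul_sq, norm_neg, Complex.norm_conj, Complex.norm_conj, add_comm]

theorem sq_norm_mul_norm_le_of_apply_eq_smul (M : E →L[ℂ] E) {μ : ℂ} {v : E}
    (hv : M v = μ • v) : ‖μ‖ ^ 2 * ‖v‖ ≤ ‖M‖ * ‖M v‖ := by
  have hMv : ‖M v‖ = ‖μ‖ * ‖v‖ := by rw [hv, norm_smul]
  rcases (norm_nonneg v).eq_or_lt with hv0 | hv0
  · rw [← hv0, mul_zero]; positivity
  have hμ : ‖μ‖ ≤ ‖M‖ := le_of_mul_le_mul_right (hMv ▸ M.le_opNorm v) hv0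
  rw [hMv, sq, mul_assoc]
  exact mul_le_mul_of_nonneg_right hμ (by positivity)

theorem norm_mul_norm_mul_norm_le_of_upperTriangular (M : E →L[ℂ] E) {e₁ e₂ : E}
    (he : Orthonormal ℂ ![e₁, e₂]) {μ ν γ : ℂ} (h₁ : M e₁ = μ • e₁)
    (h₂ : M e₂ = γ • e₁ + ν • e₂) (a b : ℂ) :
    ‖μ‖ * ‖ν‖ * ‖a • e₁ + b • e₂‖ ≤ ‖M‖ * ‖M (a • e₁ + b • e₂)‖ := by
  set x := a • e₁ + b • e₂
  have hMx : M x = (μ * a + γ * b) • e₁ + (ν * b) • e₂ := by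
    simp only [x, map_add, map_smul, h₁, h₂]; module
  have hMx' : M (-conj b • e₁ + conj a • e₂) =
      (conj a * γ - conj b * μ) • e₁ + (conj a * ν) • e₂ := by
    simp only [map_add, map_smul, h₁, h₂]; module
  have key : ⟪M (-conj b • e₁ + conj a • e₂), -conj (ν * b) • e₁ + conj (μ * a + γ * b) • e₂⟫_ℂ
      = conj (μ * ν) * (‖x‖ ^ 2 : ℝ) := by
    rw [he.norm_smul_add_smul_sq, hMx', he.inner_smul_add_smul]
    push_cast
    rw [← Complex.conj_mul', ← Complex.conj_mul']
    simp only [map_sub, map_mul, map_add, Complex.conj_conj]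
    ring
  rcases (norm_nonneg x).eq_or_lt with hx0 | hx0
  · rw [← hx0, mul_zero]; positivity
  refine le_of_mul_le_mul_right ?_ hx0
  calc ‖μ‖ * ‖ν‖ * ‖x‖ * ‖x‖ = ‖conj (μ * ν) * (‖x‖ ^ 2 : ℝ)‖ := by
        rw [norm_mul, Complex.norm_conj, Complex.norm_real, norm_mul,
          Real.norm_of_nonneg (by positivity)]
        ring
    _ ≤ ‖M (-conj b • e₁ + conj a • e₂)‖ * ‖-conj (ν * b) • e₁ + conj (μ * a + γ * b) • e₂‖ :=
        key ▸ norm_inner_le_norm _ _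
    _ ≤ ‖M‖ * ‖x‖ * ‖M x‖ := by
        rw [he.norm_conj_swap, ← hMx]
        exact mul_le_mul_of_nonneg_right (he.norm_conj_swap a b ▸ M.le_opNorm _) (norm_nonneg _)
    _ = ‖M‖ * ‖M x‖ * ‖x‖ := by ring

theorem norm_mul_norm_mul_norm_le_of_apply_eq_smul_add_smul (M : E →L[ℂ] E) {μ ν κ : ℂ}
    {e₁ v : E} (he₁ : ‖e₁‖ = 1) (h₁ : M e₁ = μ • e₁) (hv : M v = ν • v + κ • e₁)
    (hd : v - ⟪e₁, v⟫_ℂ • e₁ ≠ 0) :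
    ‖μ‖ * ‖ν‖ * ‖v‖ ≤ ‖M‖ * ‖M v‖ := by
  set a := ⟪e₁, v⟫_ℂ
  set d := v - a • e₁
  set e₂ : E := (‖d‖⁻¹ : ℂ) • d
  have he₂ : ‖e₂‖ = 1 := norm_smul_inv_norm hd
  have h₁₂ : ⟪e₁, e₂⟫_ℂ = 0 := by
    rw [inner_smul_right, inner_sub_right, inner_smul_right,
      inner_self_eq_one_of_norm_eq_one he₁, mul_one, sub_self, mul_zero]
  have he : Orthonormal ℂ ![e₁, e₂] := by
    rw [orthonormal_iff_ite]
    simp [Fin.forall_fin_two, he₁, he₂, h₁₂, inner_eq_zero_symm.mp h₁₂]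
  have hd' : d = (‖d‖ : ℂ) • e₂ := by
    rw [smul_smul, mul_inv_cancel₀ (by simpa using hd), one_smul]
  have hv' : v = a • e₁ + (‖d‖ : ℂ) • e₂ := by rw [← hd', add_sub_cancel]
  have h₂ : M e₂ = ((‖d‖⁻¹ : ℂ) * ((ν - μ) * a + κ)) • e₁ + ν • e₂ := by
    have hMd : M d = ((ν - μ) * a + κ) • e₁ + ν • d := by
      rw [map_sub, map_smul, hv, h₁, hd', hv']
      module
    rw [map_smul, hMd, smul_add, smul_smul, smul_comm _ ν d]
  exact hv' ▸ norm_mul_norm_mul_norm_le_of_upperTriangular M he h₁ h₂ _ _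

theorem min_sq_mul_norm_le_of_apply_eq_smul_add_smul (M : E →L[ℂ] E) {μ ν κ : ℂ} {u v : E}
    (hu : M u = μ • u) (hv : M v = ν • v + κ • u) :
    min ‖μ‖ ‖ν‖ ^ 2 * ‖v‖ ≤ ‖M‖ * ‖M v‖ := by
  have of_eigen {ρ : ℂ} (hρ : min ‖μ‖ ‖ν‖ ≤ ‖ρ‖) (hvρ : M v = ρ • v) :
      min ‖μ‖ ‖ν‖ ^ 2 * ‖v‖ ≤ ‖M‖ * ‖M v‖ :=
    (mul_le_mul_of_nonneg_right (pow_le_pow_left₀ (by positivity) hρ 2) (norm_nonneg v)).trans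
      (sq_norm_mul_norm_le_of_apply_eq_smul M hvρ)
  rcases eq_or_ne u 0 with rfl | hu0
  · exact of_eigen (min_le_right _ _) (by simpa using hv)
  set e₁ : E := (‖u‖⁻¹ : ℂ) • u
  have hu' : u = (‖u‖ : ℂ) • e₁ := by
    rw [smul_smul, mul_inv_cancel₀ (by simpa using hu0), one_smul]
  have h₁ : M e₁ = μ • e₁ := by rw [map_smul, hu, smul_comm]
  rcases eq_or_ne (v - ⟪e₁, v⟫_ℂ • e₁) 0 with hd | hd
  · refine of_eigen (min_le_left _ _) ?_
    rw [sub_eq_zero.mp hd, map_smul, h₁, smul_comm]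
  have hv₁ : M v = ν • v + (κ * ‖u‖) • e₁ := by conv_lhs => rw [hv, hu', smul_smul]
  calc min ‖μ‖ ‖ν‖ ^ 2 * ‖v‖ ≤ ‖μ‖ * ‖ν‖ * ‖v‖ := by
        gcongr
        rw [sq]
        exact mul_le_mul (min_le_left _ _) (min_le_right _ _) (by positivity) (norm_nonneg _)
    _ ≤ ‖M‖ * ‖M v‖ :=
        norm_mul_norm_mul_norm_le_of_apply_eq_smul_add_smul M (norm_smul_inv_norm hu0) h₁ hv₁ hd

theorem min_sq_mul_norm_le_of_apply_apply_eq_sq_smul (T : E →L[ℂ] E) (s w : ℂ) {v : E}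
    (hv : T (T v) = w ^ 2 • v) :
    min ‖s - w‖ ‖s + w‖ ^ 2 * ‖v‖ ≤ ‖s • 1 - T‖ * ‖(s • 1 - T) v‖ := by
  refine min_sq_mul_norm_le_of_apply_eq_smul_add_smul _ (u := T v + w • v) (κ := -1) ?_ ?_
  · simp only [sub_apply, smul_apply, one_apply_eq_self, map_add, map_smul, hv]
    module
  · simp only [sub_apply, smul_apply, one_apply_eq_self]
    module

end

open Matrix
open scoped Matrix.Norms.L2Operator

theorem stmt_13_general (n : ℕ)
    (X Xtil : Matrix (Fin n) (Fin n) ℂ)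
    (c : ℂ)
    (hXtil : Xtil = X - c • 1)
    (z w : ℂ)
    (v : EuclideanSpace ℂ (Fin n))
    (hv : Matrix.toEuclideanCLM (𝕜 := ℂ) (Xtil ^ 2) v = w ^ 2 • v) :
    ‖z • (1 : Matrix (Fin n) (Fin n) ℂ) - X‖ *
        ‖Matrix.toEuclideanCLM (𝕜 := ℂ) (z • (1 : Matrix (Fin n) (Fin n) ℂ) - X) v‖ ≥
      (min ‖z - (c + w)‖ ‖z - (c - w)‖) ^ 2 * ‖v‖ := by
  have hM : toEuclideanCLM (𝕜 := ℂ) (z • (1 : Matrix (Fin n) (Fin n) ℂ) - X) =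
      (z - c) • 1 - toEuclideanCLM (𝕜 := ℂ) Xtil := by
    rw [hXtil, map_sub, map_sub, map_smul, map_smul, map_one]
    module
  have hT : toEuclideanCLM (𝕜 := ℂ) Xtil (toEuclideanCLM (𝕜 := ℂ) Xtil v) = w ^ 2 • v := by
    rwa [pow_two, map_mul] at hv
  rw [ge_iff_le, ← l2_opNorm_toEuclideanCLM, hM, show z - (c + w) = z - c - w by ring,
    show z - (c - w) = z - c + w by ring]
  exact min_sq_mul_norm_le_of_apply_apply_eq_sq_smul _ (z - c) w hT

/-- For `w ≠ 0`, `λ₊ = c + w`, `λ₋ = c − w`, and every `v ∈ ℂⁿ` with `X̃²v = w²·v`,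
`‖z·I − X‖ · ‖(z·I − X)v‖ ≥ (min(|z − λ₊|, |z − λ₋|))² · ‖v‖`. -/
theorem stmt_13 (n : ℕ) (hn : 1 ≤ n) (α α' β β' : ℝ)
    (P Q X Xtil : Matrix (Fin n) (Fin n) ℂ)
    (hP : P.IsHermitian) (hQ : Q.IsHermitian)
    (hPs : (P - (α : ℂ) • 1) * (P - (α' : ℂ) • 1) = 0)
    (hQs : (Q - (β : ℂ) • 1) * (Q - (β' : ℂ) • 1) = 0)
    (hX : X = P + Complex.I • Q)
    (c : ℂ)
    (hc : c = (((α + α') / 2 : ℝ) : ℂ) + Complex.I * (((β + β') / 2 : ℝ) : ℂ))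
    (hXtil : Xtil = X - c • 1)
    (z w : ℂ) (hw : w ≠ 0)
    (v : EuclideanSpace ℂ (Fin n))
    (hv : Matrix.toEuclideanCLM (𝕜 := ℂ) (Xtil ^ 2) v = w ^ 2 • v) :
    ‖z • (1 : Matrix (Fin n) (Fin n) ℂ) - X‖ *
        ‖Matrix.toEuclideanCLM (𝕜 := ℂ) (z • (1 : Matrix (Fin n) (Fin n) ℂ) - X) v‖ ≥
      (min ‖z - (c + w)‖ ‖z - (c - w)‖) ^ 2 * ‖v‖ :=
  stmt_13_general n X Xtil c hXtil z w v hv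
end

section
/- Let z ∈ ℂ. Then for every v ∈ ℂⁿ with X̃²v = 0 one has ‖z·I − X‖ · ‖(z·I − X)v‖ ≥ |z − c|² · ‖v‖. -/
/-!
Put `T = z·I − X` and `d = z − c`, so that `(T − d)² v = 0`. The plane spanned by `v` and `T v`
is `T`-invariant, and on it `T` has the double eigenvalue `d`, hence determinant `d²`. The Gram
determinant `G(a, b) = ‖a‖²‖b‖² − |⟪a, b⟫|²` of two vectors of that plane is therefore multiplied
by `|d|⁴` under `T`. Taking for `x` the component of `T v` orthogonal to `v`,
`|d|⁴ ‖x‖² ‖v‖² = G(T x, T v) ≤ ‖T x‖² ‖T v‖² ≤ ‖T‖² ‖x‖² ‖T v‖²`; when `x = 0`, `v` is an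
eigenvector for `d` and the bound is immediate.
-/

open Matrix
open scoped Matrix.Norms.L2Operator InnerProductSpace

namespace InnerProductSpace

variable (𝕜 : Type*) {E : Type*} [RCLike 𝕜] [NormedAddCommGroup E] [InnerProductSpace 𝕜 E]

def gram (a b : E) : ℝ := ‖a‖ ^ 2 * ‖b‖ ^ 2 - ‖⟪a, b⟫_𝕜‖ ^ 2

lemma ofReal_gram (a b : E) :
    (gram 𝕜 a b : 𝕜) = ⟪a, a⟫_𝕜 * ⟪b, b⟫_𝕜 - ⟪a, b⟫_𝕜 * ⟪b, a⟫_𝕜 := by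
  rw [gram, ← inner_conj_symm b a, RCLike.mul_conj, inner_self_eq_norm_sq_to_K,
    inner_self_eq_norm_sq_to_K]
  push_cast
  rfl

variable {𝕜}

lemma gram_comm (a b : E) : gram 𝕜 a b = gram 𝕜 b a := by
  apply RCLike.ofReal_injective (K := 𝕜)
  rw [ofReal_gram, ofReal_gram]
  ring

lemma gram_add_smul_left (a b : E) (t : 𝕜) : gram 𝕜 (a + t • b) b = gram 𝕜 a b := by
  apply RCLike.ofReal_injective (K := 𝕜)
  simp only [ofReal_gram, inner_add_left, inner_add_right, inner_smul_left, inner_smul_right]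
  ring

lemma gram_smul_left (a b : E) (t : 𝕜) : gram 𝕜 (t • a) b = ‖t‖ ^ 2 * gram 𝕜 a b := by
  apply RCLike.ofReal_injective (K := 𝕜)
  simp only [ofReal_gram, inner_smul_left, inner_smul_right, RCLike.ofReal_mul,
    RCLike.ofReal_pow, ← RCLike.conj_mul]
  ring

lemma gram_le (a b : E) : gram 𝕜 a b ≤ ‖a‖ ^ 2 * ‖b‖ ^ 2 :=
  sub_le_self _ (sq_nonneg _)

lemma gram_of_inner_eq_zero {a b : E} (h : ⟪a, b⟫_𝕜 = 0) :
    gram 𝕜 a b = ‖a‖ ^ 2 * ‖b‖ ^ 2 := by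
  simp [gram, h]

end InnerProductSpace

namespace ContinuousLinearMap

open InnerProductSpace

variable {𝕜 E : Type*} [RCLike 𝕜] [NormedAddCommGroup E] [InnerProductSpace 𝕜 E]

lemma apply_apply_eq_of_sq_sub_apply_eq_zero {T : E →L[𝕜] E} {d : 𝕜} {v : E}
    (hv : ((T - d • 1) ^ 2 : E →L[𝕜] E) v = 0) : T (T v) = (2 * d) • T v - d ^ 2 • v := by
  simp only [sq, mul_apply_eq_comp, _root_.sub_apply, _root_.smul_apply, one_apply_eq_self,
    map_sub, map_smul] at hv
  linear_combination (norm := module) hv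

lemma gram_apply_sub_smul_apply {T : E →L[𝕜] E} {d : 𝕜} {v : E}
    (hv : T (T v) = (2 * d) • T v - d ^ 2 • v) (μ : 𝕜) :
    gram 𝕜 (T (T v - μ • v)) (T v) = ‖d‖ ^ 4 * gram 𝕜 (T v - μ • v) v := by
  have hTx : T (T v - μ • v) = (-d ^ 2) • v + (2 * d - μ) • T v := by
    rw [map_sub, map_smul, hv]
    module
  calc gram 𝕜 (T (T v - μ • v)) (T v)
      = ‖d‖ ^ 4 * gram 𝕜 (T v) v := by
        rw [hTx, gram_add_smul_left, gram_smul_left, gram_comm, norm_neg, norm_pow]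
        ring
    _ = ‖d‖ ^ 4 * gram 𝕜 (T v - μ • v) v := by
        rw [sub_eq_add_neg, ← neg_smul, gram_add_smul_left]

lemma norm_sq_mul_norm_le_of_apply_eq_smul {T : E →L[𝕜] E} {d : 𝕜} {v : E}
    (hTv : T v = d • v) : ‖d‖ ^ 2 * ‖v‖ ≤ ‖T‖ * ‖T v‖ := by
  rcases eq_or_ne v 0 with rfl | hv0
  · simp
  have hd : ‖d‖ ≤ ‖T‖ := by
    refine le_of_mul_le_mul_right ?_ (norm_pos_iff.2 hv0)
    rw [← norm_smul, ← hTv]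
    exact T.le_opNorm v
  calc ‖d‖ ^ 2 * ‖v‖ = ‖d‖ * ‖T v‖ := by rw [hTv, norm_smul]; ring
    _ ≤ ‖T‖ * ‖T v‖ := by gcongr

lemma norm_sq_mul_norm_le_of_sq_sub_apply_eq_zero (T : E →L[𝕜] E) (d : 𝕜) (v : E)
    (hv : ((T - d • 1) ^ 2 : E →L[𝕜] E) v = 0) : ‖d‖ ^ 2 * ‖v‖ ≤ ‖T‖ * ‖T v‖ := by
  replace hv := apply_apply_eq_of_sq_sub_apply_eq_zero hv
  rcases eq_or_ne v 0 with rfl | hv0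
  · simp
  set μ := ⟪v, T v⟫_𝕜 / ⟪v, v⟫_𝕜
  set x := T v - μ • v
  by_cases hx : x = 0
  · have hTv : T v = μ • v := sub_eq_zero.1 hx
    have hμv : (μ - d) ^ 2 • v = 0 := by
      rw [hTv, map_smul, hTv, smul_smul] at hv
      linear_combination (norm := module) hv
    have hμ : μ = d := by simpa [sub_eq_zero, hv0] using hμv
    exact norm_sq_mul_norm_le_of_apply_eq_smul (hμ ▸ hTv)
  have hxv : ⟪x, v⟫_𝕜 = 0 := by
    rw [inner_eq_zero_symm, inner_sub_right, inner_smul_right,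
      div_mul_cancel₀ _ (inner_self_ne_zero.2 hv0), sub_self]
  have key : ‖x‖ ^ 2 * (‖d‖ ^ 2 * ‖v‖) ^ 2 ≤ ‖x‖ ^ 2 * (‖T‖ * ‖T v‖) ^ 2 :=
    calc ‖x‖ ^ 2 * (‖d‖ ^ 2 * ‖v‖) ^ 2 = gram 𝕜 (T x) (T v) := by
          rw [gram_apply_sub_smul_apply hv, gram_of_inner_eq_zero hxv]
          ring
      _ ≤ ‖T x‖ ^ 2 * ‖T v‖ ^ 2 := gram_le _ _
      _ ≤ (‖T‖ * ‖x‖) ^ 2 * ‖T v‖ ^ 2 := by gcongr; exact T.le_opNorm x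
      _ = ‖x‖ ^ 2 * (‖T‖ * ‖T v‖) ^ 2 := by ring
  have hsq := le_of_mul_le_mul_left key (by positivity)
  exact (pow_le_pow_iff_left₀ (by positivity) (by positivity) two_ne_zero).1 hsq

end ContinuousLinearMap

theorem stmt_14_general (n : ℕ)
    (X Xtil : Matrix (Fin n) (Fin n) ℂ)
    (c : ℂ)
    (hXtil : Xtil = X - c • 1)
    (z : ℂ) (v : EuclideanSpace ℂ (Fin n))
    (hv : Matrix.toEuclideanCLM (𝕜 := ℂ) (Xtil ^ 2) v = 0) :
    ‖z • (1 : Matrix (Fin n) (Fin n) ℂ) - X‖ *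
        ‖Matrix.toEuclideanCLM (𝕜 := ℂ) (z • (1 : Matrix (Fin n) (Fin n) ℂ) - X) v‖ ≥
      ‖z - c‖ ^ 2 * ‖v‖ := by
  set A : Matrix (Fin n) (Fin n) ℂ := z • 1 - X
  have hXtil_sq : Xtil ^ 2 = (A - (z - c) • 1) ^ 2 := by
    rw [hXtil, ← neg_sq]
    congr 1
    module
  rw [hXtil_sq, map_pow, map_sub, map_smul, map_one] at hv
  exact (toEuclideanCLM (𝕜 := ℂ) A).norm_sq_mul_norm_le_of_sq_sub_apply_eq_zero (z - c) v hv

/-- For every `v ∈ ℂⁿ` with `X̃²v = 0`, `‖z·I − X‖ · ‖(z·I − X)v‖ ≥ |z − c|² · ‖v‖`. -/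
theorem stmt_14 (n : ℕ) (hn : 1 ≤ n) (α α' β β' : ℝ)
    (P Q X Xtil : Matrix (Fin n) (Fin n) ℂ)
    (hP : P.IsHermitian) (hQ : Q.IsHermitian)
    (hPs : (P - (α : ℂ) • 1) * (P - (α' : ℂ) • 1) = 0)
    (hQs : (Q - (β : ℂ) • 1) * (Q - (β' : ℂ) • 1) = 0)
    (hX : X = P + Complex.I • Q)
    (c : ℂ)
    (hc : c = (((α + α') / 2 : ℝ) : ℂ) + Complex.I * (((β + β') / 2 : ℝ) : ℂ))
    (hXtil : Xtil = X - c • 1)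
    (z : ℂ) (v : EuclideanSpace ℂ (Fin n))
    (hv : Matrix.toEuclideanCLM (𝕜 := ℂ) (Xtil ^ 2) v = 0) :
    ‖z • (1 : Matrix (Fin n) (Fin n) ℂ) - X‖ *
        ‖Matrix.toEuclideanCLM (𝕜 := ℂ) (z • (1 : Matrix (Fin n) (Fin n) ℂ) - X) v‖ ≥
      ‖z - c‖ ^ 2 * ‖v‖ :=
  stmt_14_general n X Xtil c hXtil z v hv
end
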